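/- Let x̄ be a Lipschitz continuous W^{1,1}-local minimizer of problem (CV) such that hypothesis (CV1) holds and int T_A(z) ≠ ∅ for all z ∈ x̄([S,T]) ∩ ∂A. Then there exist positive constants ε, ρ, β, C, C₁ and a measurable function v : [S,T] → ℝⁿ such that: (i) ‖v − ẋ̄‖_{L∞} ≤ C and ‖v‖_{L∞} ≤ C₁; (ii) for every τ ∈ [S,T] with x̄(τ) ∈ ∂A, one has (v(t) − ẋ̄(t)) · η < −β for all η ∈ co(N_A(x̄(s)) ∩ ∂𝔹), for a.e. s, t ∈ (τ − ε, τ]; (iii) if x₀ = x̄(S) ∈ ∂A, then (v(t) − ẋ̄(t)) · η < −β for all η ∈ co(N_A(x) ∩ ∂𝔹) and all x ∈ (x₀ + ρ𝔹) ∩ ∂A, for a.e. t ∈ [S, S + ε). -/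

import Mathlib

open Set MeasureTheory Filter Topology Metric
open scoped RealInnerProductSpace

noncomputable section

/-- The proximal normal cone to `A` at `x`. -/
def proxNormalCone {H : Type*} [NormedAddCommGroup H] [InnerProductSpace ℝ H]
    (A : Set H) (x : H) : Set H :=
  {η | ∃ M > 0, ∀ y ∈ A, ⟪η, y - x⟫ ≤ M * ‖y - x‖ ^ 2}

/-- The limiting normal cone to `A` at `x`. -/
def limitingNormalCone {H : Type*} [NormedAddCommGroup H] [InnerProductSpace ℝ H]
    (A : Set H) (x : H) : Set H :=
  {η | ∃ xs ηs : ℕ → H, (∀ i, xs i ∈ A) ∧ (∀ i, ηs i ∈ proxNormalCone A (xs i)) ∧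
    Tendsto xs atTop (𝓝 x) ∧ Tendsto ηs atTop (𝓝 η)}

/-- The Clarke tangent cone to `A` at `x`. -/
def clarkeTangentCone {H : Type*} [NormedAddCommGroup H] [InnerProductSpace ℝ H]
    (A : Set H) (x : H) : Set H :=
  {ξ | ∀ (xs : ℕ → H) (ts : ℕ → ℝ), (∀ i, xs i ∈ A) → Tendsto xs atTop (𝓝 x) →
      (∀ i, 0 < ts i) → Tendsto ts atTop (𝓝 0) →
      ∃ as : ℕ → H, (∀ i, as i ∈ A) ∧
        Tendsto (fun i => (ts i)⁻¹ • (as i - xs i)) atTop (𝓝 ξ)}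

variable {n : ℕ}

/-- An admissible arc for the calculus of variations problem (CV): `x` is a `W^{1,1}`
arc with (a.e.) derivative `x'`, satisfying the initial condition `x(S) = x₀`, the
state constraint `x(t) ∈ A` on `[S,T]`, and having finite cost. -/
def CVAdmissible (S T : ℝ) (L : ℝ → EuclideanSpace ℝ (Fin n) → EuclideanSpace ℝ (Fin n) → ℝ)
    (x₀ : EuclideanSpace ℝ (Fin n)) (A : Set (EuclideanSpace ℝ (Fin n)))
    (x x' : ℝ → EuclideanSpace ℝ (Fin n)) : Prop :=
  IntegrableOn x' (Icc S T) ∧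
  (∀ t ∈ Icc S T, x t = x₀ + ∫ s in Icc S t, x' s) ∧
  (∀ t ∈ Icc S T, x t ∈ A) ∧
  IntegrableOn (fun t => L t (x t) (x' t)) (Icc S T)

/-- `x̄` (with derivative `x̄'`) is a `W^{1,1}`-local minimizer of (CV). -/
def IsW11LocalMinCV (S T : ℝ)
    (L : ℝ → EuclideanSpace ℝ (Fin n) → EuclideanSpace ℝ (Fin n) → ℝ)
    (x₀ : EuclideanSpace ℝ (Fin n)) (A : Set (EuclideanSpace ℝ (Fin n)))
    (xb xb' : ℝ → EuclideanSpace ℝ (Fin n)) : Prop :=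
  CVAdmissible S T L x₀ A xb xb' ∧
  ∃ ε > (0 : ℝ), ∀ x x' : ℝ → EuclideanSpace ℝ (Fin n), CVAdmissible S T L x₀ A x x' →
    ‖x S - xb S‖ + ∫ t in Icc S T, ‖x' t - xb' t‖ ≤ ε →
    ∫ t in Icc S T, L t (xb t) (xb' t) ≤ ∫ t in Icc S T, L t (x t) (x' t)

/-- Hypothesis (CV1): `L(t,x,v)` is measurable in `(t,v)`, bounded on bounded sets,
and Lipschitz in `x` near the reference arc, uniformly in `v`. -/
def HypCV1 (S T : ℝ) (L : ℝ → EuclideanSpace ℝ (Fin n) → EuclideanSpace ℝ (Fin n) → ℝ)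
    (xb : ℝ → EuclideanSpace ℝ (Fin n)) : Prop :=
  (∀ x : EuclideanSpace ℝ (Fin n),
    Measurable (fun p : ℝ × EuclideanSpace ℝ (Fin n) => L p.1 x p.2)) ∧
  (∀ r > (0 : ℝ), ∃ M : ℝ, ∀ t ∈ Icc S T, ∀ x v : EuclideanSpace ℝ (Fin n),
    ‖x‖ ≤ r → ‖v‖ ≤ r → |L t x v| ≤ M) ∧
  (∃ ε' > (0 : ℝ), ∃ K_L > (0 : ℝ), ∀ t ∈ Icc S T,
    ∀ x ∈ closedBall (xb t) ε', ∀ y ∈ closedBall (xb t) ε',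
    ∀ v : EuclideanSpace ℝ (Fin n), |L t x v - L t y v| ≤ K_L * ‖x - y‖)

/-!
At a boundary point `z` of the arc, an interior vector `ξ` of the Clarke tangent cone has negative
inner product with every unit limiting normal at `z` (the two cones are polar), and, since the
graph of the limiting normal cone is closed and the unit sphere is compact, also at all points
near `z`. Finitely many such balls cover the compact set `x̄([S,T]) ∩ ∂A`, and a first-fit rule
glues the corresponding vectors into a bounded measurable field `Ξ`. The control is
`v = ẋ̄ + Ξ ∘ x̄`: as `x̄` is Lipschitz, for `s, t` within `ε` of a boundary time the points `x̄(s)`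
and `x̄(t)` stay in the ball where the vector chosen at `x̄(t)` works.
-/

section Cones

variable {H : Type*} [NormedAddCommGroup H] [InnerProductSpace ℝ H]

theorem inner_smul_le_of_proximal {A : Set H} {x η a : H} {M t : ℝ}
    (hM : ∀ y ∈ A, ⟪η, y - x⟫ ≤ M * ‖y - x‖ ^ 2) (ha : a ∈ A) (ht : 0 < t) :
    ⟪η, t⁻¹ • (a - x)⟫ ≤ M * t * ‖t⁻¹ • (a - x)‖ ^ 2 := by
  have h := hM a ha
  rw [real_inner_smul_right, norm_smul, mul_pow, Real.norm_eq_abs, abs_inv, abs_of_pos ht]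
  field_simp
  nlinarith

theorem inner_nonpos_of_mem_clarkeTangentCone_of_mem_limitingNormalCone {A : Set H} {z ξ η : H}
    (hξ : ξ ∈ clarkeTangentCone A z) (hη : η ∈ limitingNormalCone A z) : ⟪ξ, η⟫ ≤ 0 := by
  obtain ⟨xs, ηs, hxsA, hprox, hxs, hηs⟩ := hη
  choose M hMpos hM using hprox
  -- steps short enough that `M i * ts i → 0`, so the proximal inequalities pass to the limit
  set ts : ℕ → ℝ := fun i => ((i + 1) * (M i + 1))⁻¹
  have hts_pos : ∀ i, 0 < ts i := fun i => by have := hMpos i; positivity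
  have hts_eq : ∀ i, (M i + 1) * ts i = 1 / ((i : ℝ) + 1) := fun i => by
    have := hMpos i
    simp only [ts]
    field_simp
  have hMts : ∀ i, M i * ts i ≤ 1 / ((i : ℝ) + 1) := fun i => by
    linarith [hts_pos i, hts_eq i]
  have hts_le : ∀ i, ts i ≤ 1 / ((i : ℝ) + 1) := fun i => by
    nlinarith [hts_pos i, hts_eq i, mul_pos (hMpos i) (hts_pos i)]
  obtain ⟨as, hasA, hw⟩ := hξ xs ts hxsA hxs hts_pos
    (squeeze_zero (fun i => (hts_pos i).le) hts_le tendsto_one_div_add_atTop_nhds_zero_nat)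
  have hMts_lim : Tendsto (fun i => M i * ts i) atTop (𝓝 0) :=
    squeeze_zero (fun i => (mul_pos (hMpos i) (hts_pos i)).le) hMts
      tendsto_one_div_add_atTop_nhds_zero_nat
  have hbound : Tendsto (fun i => M i * ts i * ‖(ts i)⁻¹ • (as i - xs i)‖ ^ 2) atTop (𝓝 0) := by
    simpa using hMts_lim.mul (hw.norm.pow 2)
  rw [real_inner_comm]
  exact le_of_tendsto_of_tendsto' (hηs.inner hw) hbound
    fun i => inner_smul_le_of_proximal (hM i) (hasA i) (hts_pos i)

theorem mem_limitingNormalCone_iff_mem_closure {A : Set H} {x η : H} :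
    η ∈ limitingNormalCone A x ↔
      (x, η) ∈ closure {p : H × H | p.1 ∈ A ∧ p.2 ∈ proxNormalCone A p.1} := by
  rw [mem_closure_iff_seq_limit]
  constructor
  · rintro ⟨xs, ηs, hxsA, hprox, hxs, hηs⟩
    exact ⟨fun i => (xs i, ηs i), fun i => ⟨hxsA i, hprox i⟩, hxs.prodMk_nhds hηs⟩
  · rintro ⟨p, hp, hlim⟩
    exact ⟨fun i => (p i).1, fun i => (p i).2, fun i => (hp i).1, fun i => (hp i).2,
      hlim.fst_nhds, hlim.snd_nhds⟩

theorem isClosed_limitingNormalCone_graph (A : Set H) :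
    IsClosed {p : H × H | p.2 ∈ limitingNormalCone A p.1} := by
  convert isClosed_closure (s := {p : H × H | p.1 ∈ A ∧ p.2 ∈ proxNormalCone A p.1}) using 1
  ext p
  exact mem_limitingNormalCone_iff_mem_closure

theorem exists_inner_le_neg_of_mem_interior_clarkeTangentCone {A : Set H} {z ξ : H}
    (hξ : ξ ∈ interior (clarkeTangentCone A z)) :
    ∃ r > 0, ∀ η ∈ limitingNormalCone A z ∩ sphere 0 1, ⟪ξ, η⟫ ≤ -r := by
  obtain ⟨r, hr, hball⟩ := Metric.isOpen_iff.mp isOpen_interior ξ hξ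
  refine ⟨r / 2, half_pos hr, fun η ⟨hηN, hη1⟩ => ?_⟩
  rw [mem_sphere_zero_iff_norm] at hη1
  have hmem : ξ + (r / 2) • η ∈ clarkeTangentCone A z := by
    refine interior_subset (hball ?_)
    rw [mem_ball, dist_eq_norm, add_sub_cancel_left, norm_smul, hη1,
      Real.norm_of_nonneg (half_pos hr).le]
    linarith
  have h := inner_nonpos_of_mem_clarkeTangentCone_of_mem_limitingNormalCone hmem hηN
  rw [inner_add_left, real_inner_smul_left, real_inner_self_eq_norm_sq, hη1] at h
  linarith

theorem eventually_inner_lt_of_limitingNormalCone [ProperSpace H] {A : Set H} {z ξ : H} {c : ℝ}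
    (h : ∀ η ∈ limitingNormalCone A z ∩ sphere 0 1, ⟪ξ, η⟫ < c) :
    ∀ᶠ x in 𝓝 z, ∀ η ∈ limitingNormalCone A x ∩ sphere 0 1, ⟪ξ, η⟫ < c := by
  have htube : ∀ᶠ x in 𝓝 z, ∀ η ∈ sphere (0 : H) 1, η ∈ limitingNormalCone A x → ⟪ξ, η⟫ < c := by
    refine (isCompact_sphere 0 1).eventually_forall_of_forall_eventually fun η hη => ?_
    by_cases hηN : η ∈ limitingNormalCone A z
    · have hcont : Continuous fun p : H × H => ⟪ξ, p.2⟫ := continuous_const.inner continuous_snd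
      exact (hcont.continuousAt.eventually_lt continuousAt_const (h η ⟨hηN, hη⟩)).mono
        fun p hp _ => hp
    · exact Filter.Eventually.mono
        ((isClosed_limitingNormalCone_graph A).isOpen_compl.mem_nhds (x := (z, η)) hηN)
        fun p hp hpN => absurd hpN hp
  exact htube.mono fun x hx η hη => hx η hη.2 hη.1

/-- The margin `1` is a normalisation: a uniform negative bound can always be rescaled to it. -/
def PointsInward (A : Set H) (ξ x : H) : Prop :=
  ∀ η ∈ convexHull ℝ (limitingNormalCone A x ∩ sphere 0 1), ⟪ξ, η⟫ ≤ -1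

theorem exists_pointsInward_of_interior_clarkeTangentCone_nonempty [ProperSpace H]
    {A : Set H} {z : H} (h : (interior (clarkeTangentCone A z)).Nonempty) :
    ∃ ξ, ∃ ρ > 0, ∀ x ∈ closedBall z ρ, PointsInward A ξ x := by
  obtain ⟨ξ, hξ⟩ := h
  obtain ⟨r, hr, hz⟩ := exists_inner_le_neg_of_mem_interior_clarkeTangentCone hξ
  obtain ⟨ρ, hρ, hnear⟩ := Metric.nhds_basis_closedBall.eventually_iff.mp
    (eventually_inner_lt_of_limitingNormalCone (ξ := ξ) (c := -(r / 2)) fun η hη => by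
      linarith [hz η hη])
  refine ⟨(2 / r) • ξ, ρ, hρ, fun x hx => convexHull_min (fun η hη => ?_)
    (convex_halfSpace_le (innerₛₗ ℝ ((2 / r) • ξ)).isLinear _)⟩
  have h := hnear hx η hη
  show ⟪(2 / r) • ξ, η⟫ ≤ -1
  rw [real_inner_smul_left, div_mul_eq_mul_div, div_le_iff₀ hr]
  linarith

end Cones

section Selection

variable {X E : Type*}

open scoped Classical in
def pickFirst [Zero E] : List (Set X × E) → X → E
  | [], _ => 0
  | p :: l, x => if x ∈ p.1 then p.2 else pickFirst l x

theorem measurable_pickFirst [Zero E] [MeasurableSpace X] [MeasurableSpace E] :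
    ∀ {l : List (Set X × E)}, (∀ p ∈ l, MeasurableSet p.1) → Measurable (pickFirst l)
  | [], _ => measurable_const
  | p :: _, h => Measurable.ite (h p List.mem_cons_self) measurable_const
      (measurable_pickFirst fun q hq => h q (List.mem_cons_of_mem _ hq))

theorem exists_mem_pickFirst_eq [Zero E] : ∀ {l : List (Set X × E)} {x : X}, (∃ p ∈ l, x ∈ p.1) →
    ∃ p ∈ l, x ∈ p.1 ∧ pickFirst l x = p.2
  | [], _, h => by simp at h
  | p :: l, x, h => by
    by_cases hx : x ∈ p.1
    · exact ⟨p, List.mem_cons_self, hx, if_pos hx⟩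
    · have hl : ∃ q ∈ l, x ∈ q.1 := by
        obtain ⟨q, hq, hxq⟩ := h
        rcases List.mem_cons.mp hq with rfl | hq
        · exact absurd hxq hx
        · exact ⟨q, hq, hxq⟩
      obtain ⟨q, hq, hxq, heq⟩ := exists_mem_pickFirst_eq hl
      exact ⟨q, List.mem_cons_of_mem _ hq, hxq, (if_neg hx).trans heq⟩

theorem norm_pickFirst_le [SeminormedAddGroup E] : ∀ (l : List (Set X × E)) (x : X),
    ‖pickFirst l x‖ ≤ (l.map fun p => ‖p.2‖).sum
  | [], _ => by simp [pickFirst]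
  | p :: l, x => by
    have hl := norm_pickFirst_le l x
    have hl0 : 0 ≤ (l.map fun p => ‖p.2‖).sum := List.sum_nonneg fun a ha => by
      obtain ⟨q, -, rfl⟩ := List.mem_map.mp ha
      exact norm_nonneg _
    simp only [pickFirst, List.map_cons, List.sum_cons]
    split_ifs <;> linarith [norm_nonneg p.2]

/-- Finitely many balls `ball z (ρ z / 2)` cover `B`; at `y` take the choice of the first
enlarged ball containing `y`. -/
theorem exists_measurable_uniform_choice [SeminormedAddGroup E] [MeasurableSpace E]
    [PseudoMetricSpace X] [MeasurableSpace X] [OpensMeasurableSpace X]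
    {B : Set X} (hB : IsCompact B) (P : X → E → Prop)
    (hP : ∀ z ∈ B, ∃ ξ, ∃ ρ > 0, ∀ x ∈ closedBall z ρ, P x ξ) :
    ∃ Ξ : X → E, Measurable Ξ ∧ (∃ C, ∀ y, ‖Ξ y‖ ≤ C) ∧
      ∃ δ > 0, ∀ w ∈ B, ∀ y ∈ closedBall w δ, ∀ x ∈ closedBall y δ, P x (Ξ y) := by
  choose! ξ ρ hρ hξ using hP
  obtain ⟨t, htB, hcover⟩ := hB.elim_nhds_subcover (fun z => ball z (ρ z / 2))
    fun z hz => ball_mem_nhds z (half_pos (hρ z hz))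
  obtain ⟨δ, hδt, hδ⟩ : ∃ δ, (∀ z ∈ t, δ ≤ ρ z / 4) ∧ 0 < δ :=
    (((eventually_all_finset t).2 fun z hz => nhdsWithin_le_nhds
      (eventually_le_nhds (show (0 : ℝ) < ρ z / 4 by linarith [hρ z (htB z hz)]))).and
      (self_mem_nhdsWithin (s := Ioi (0 : ℝ)))).exists
  set l := t.toList.map fun z => (closedBall z (ρ z / 2 + δ), ξ z)
  refine ⟨pickFirst l, measurable_pickFirst ?_, ⟨_, norm_pickFirst_le l⟩, δ, hδ,
    fun w hw y hy x hx => ?_⟩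
  · simp only [l, List.mem_map]
    rintro _ ⟨z, -, rfl⟩
    exact measurableSet_closedBall
  obtain ⟨z₀, hz₀, hwz₀⟩ : ∃ z ∈ t, w ∈ ball z (ρ z / 2) := by simpa using hcover hw
  have hy₀ : y ∈ closedBall z₀ (ρ z₀ / 2 + δ) := by
    rw [mem_closedBall] at hy ⊢
    linarith [dist_triangle y w z₀, mem_ball.mp hwz₀]
  obtain ⟨p, hpl, hyp, hpick⟩ := exists_mem_pickFirst_eq (l := l)
    ⟨(closedBall z₀ (ρ z₀ / 2 + δ), ξ z₀),
      List.mem_map.mpr ⟨z₀, Finset.mem_toList.mpr hz₀, rfl⟩, hy₀⟩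
  obtain ⟨z, hz, rfl⟩ := List.mem_map.mp hpl
  have hz := Finset.mem_toList.mp hz
  rw [hpick]
  refine hξ z (htB z hz) x ?_
  rw [mem_closedBall] at hx hyp ⊢
  linarith [dist_triangle x y z, hδt z hz]

end Selection

theorem ae_norm_le_of_lipschitzOnWith_primitive {E : Type*} [NormedAddCommGroup E]
    [NormedSpace ℝ E] [CompleteSpace E] {S T : ℝ} (hST : S ≤ T) {K : NNReal}
    {x f : ℝ → E} {x₀ : E}
    (hf : IntegrableOn f (Icc S T)) (hx : ∀ t ∈ Icc S T, x t = x₀ + ∫ s in Icc S t, f s)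
    (hK : LipschitzOnWith K x (Icc S T)) :
    ∀ᵐ t ∂volume.restrict (Icc S T), ‖f t‖ ≤ K := by
  have hprim : EqOn x (fun t => x₀ + ∫ s in S..t, f s) (Icc S T) := fun t ht => by
    show x t = x₀ + ∫ s in S..t, f s
    rw [hx t ht, intervalIntegral.integral_of_le ht.1, integral_Icc_eq_integral_Ioc]
  have hfi : IntervalIntegrable f volume S T :=
    (intervalIntegrable_iff_integrableOn_Icc_of_le hST).mpr hf
  rw [← Measure.restrict_congr_set Ioo_ae_eq_Icc]
  filter_upwards [ae_restrict_mem measurableSet_Ioo,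
    ae_restrict_of_ae hfi.ae_hasDerivAt_integral] with t ht hderiv
  have hSTu : uIcc S T = Icc S T := uIcc_of_le hST
  have hIcc : Icc S T ∈ 𝓝 t := Icc_mem_nhds ht.1 ht.2
  have hd := ((hderiv (hSTu ▸ Ioo_subset_Icc_self ht) S
    (hSTu ▸ left_mem_Icc.mpr hST)).const_add x₀).congr_of_eventuallyEq
      (Filter.eventuallyEq_of_mem hIcc hprim)
  exact hd.le_of_lipschitzOn hIcc hK

theorem exists_measurable_ae_eq_add_comp {H : Type*} [NormedAddCommGroup H] [MeasurableSpace H]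
    [BorelSpace H] [SecondCountableTopology H] {S T : ℝ} (hST : S ≤ T) {xb xb' : ℝ → H}
    (hxb : ContinuousOn xb (Icc S T)) (hxb' : AEStronglyMeasurable xb' (volume.restrict (Icc S T)))
    {Ξ : H → H} (hΞ : Measurable Ξ) :
    ∃ v : ℝ → H, Measurable v ∧ ∀ᵐ t ∂volume.restrict (Icc S T), v t = xb' t + Ξ (xb t) := by
  -- `xb` is only continuous on `[S, T]`; extending it by constants keeps `v` measurable
  have hext : Continuous (IccExtend hST ((Icc S T).domRestrict xb)) :=
    continuous_IccExtend_iff.mpr hxb.domRestrict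
  refine ⟨fun t => hxb'.mk xb' t + Ξ (IccExtend hST ((Icc S T).domRestrict xb) t),
    hxb'.stronglyMeasurable_mk.measurable.add (hΞ.comp hext.measurable), ?_⟩
  filter_upwards [hxb'.ae_eq_mk, ae_restrict_mem measurableSet_Icc] with t hmk ht
  rw [← hmk, IccExtend_of_mem _ _ ht, domRestrict_apply]

section Control

variable {H : Type*} [NormedAddCommGroup H] [InnerProductSpace ℝ H] [MeasurableSpace H]
  [BorelSpace H] [SecondCountableTopology H]

theorem exists_inward_control_of_uniform_choice {A : Set H} {S T : ℝ} (hST : S < T)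
    {xb xb' : ℝ → H} {K : NNReal} (hK : LipschitzOnWith K xb (Icc S T))
    (hxb' : AEStronglyMeasurable xb' (volume.restrict (Icc S T)))
    (hbd : ∀ᵐ t ∂volume.restrict (Icc S T), ‖xb' t‖ ≤ K)
    {Ξ : H → H} (hΞm : Measurable Ξ) {C : ℝ} (hC : ∀ y, ‖Ξ y‖ ≤ C) {δ : ℝ} (hδ : 0 < δ)
    (hΞ : ∀ w ∈ xb '' Icc S T ∩ frontier A, ∀ y ∈ closedBall w δ, ∀ x ∈ closedBall y δ,
      PointsInward A (Ξ y) x) :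
    ∃ (ε ρ β C C₁ : ℝ), 0 < ε ∧ 0 < ρ ∧ 0 < β ∧ 0 < C ∧ 0 < C₁ ∧
      ∃ v : ℝ → H, Measurable v ∧
      (∀ᵐ t ∂(volume.restrict (Icc S T)), ‖v t - xb' t‖ ≤ C ∧ ‖v t‖ ≤ C₁) ∧
      (∀ τ ∈ Icc S T, xb τ ∈ frontier A →
        ∀ᵐ s ∂(volume.restrict (Ioc (τ - ε) τ ∩ Icc S T)),
        ∀ᵐ t ∂(volume.restrict (Ioc (τ - ε) τ ∩ Icc S T)),
        ∀ η ∈ convexHull ℝ (limitingNormalCone A (xb s) ∩ sphere 0 1),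
          ⟪v t - xb' t, η⟫ < -β) ∧
      (xb S ∈ frontier A →
        ∀ᵐ t ∂(volume.restrict (Ico S (S + ε))),
        ∀ x ∈ closedBall (xb S) ρ ∩ frontier A,
        ∀ η ∈ convexHull ℝ (limitingNormalCone A x ∩ sphere 0 1),
          ⟪v t - xb' t, η⟫ < -β) := by
  obtain ⟨v, hvm, hv⟩ := exists_measurable_ae_eq_add_comp hST.le hK.continuousOn hxb' hΞm
  have hv' : ∀ᵐ t ∂volume.restrict (Icc S T), v t - xb' t = Ξ (xb t) ∧ ‖xb' t‖ ≤ K := by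
    filter_upwards [hv, hbd] with t hvt hbt
    exact ⟨by rw [hvt, add_sub_cancel_left], hbt⟩
  set ε := min (T - S) (δ / (2 * (K + 1)))
  have hε : 0 < ε := lt_min (sub_pos.2 hST) (by positivity)
  have hclose : ∀ s ∈ Icc S T, ∀ t ∈ Icc S T, dist s t ≤ ε → dist (xb s) (xb t) ≤ δ / 2 := by
    intro s hs t ht hst
    have hKε : (K : ℝ) * ε ≤ δ / 2 := by
      calc (K : ℝ) * ε ≤ (K + 1) * (δ / (2 * (K + 1))) := by
            gcongr
            · linarith
            · exact min_le_right _ _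
        _ = δ / 2 := by field_simp
    exact (hK.dist_le_mul s hs t ht).trans
      ((mul_le_mul_of_nonneg_left hst K.coe_nonneg).trans hKε)
  have hinward : ∀ w ∈ xb '' Icc S T ∩ frontier A, ∀ t, dist (xb t) w ≤ δ / 2 →
      ∀ x, dist x (xb t) ≤ δ → ∀ η ∈ convexHull ℝ (limitingNormalCone A x ∩ sphere 0 1),
        ⟪Ξ (xb t), η⟫ < -(1 / 2) := fun w hw t htw x hx η hη => by
    linarith [hΞ w hw (xb t) (mem_closedBall.2 (by linarith)) x (mem_closedBall.2 hx) η hη]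
  have hC0 : 0 ≤ C := (norm_nonneg _).trans (hC 0)
  refine ⟨ε, δ / 2, 1 / 2, C + 1, C + 1 + K, hε, half_pos hδ, one_half_pos, by linarith,
    by positivity, v, hvm, ?_, ?_, ?_⟩
  · filter_upwards [hv'] with t ⟨hvt, hbt⟩
    have htri : ‖v t‖ ≤ ‖v t - xb' t‖ + ‖xb' t‖ := norm_le_norm_sub_add _ _
    rw [hvt] at htri ⊢
    constructor <;> linarith [hC (xb t)]
  · intro τ hτ hfr
    have hW : MeasurableSet (Ioc (τ - ε) τ ∩ Icc S T) := measurableSet_Ioc.inter measurableSet_Icc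
    have hdist : ∀ a ∈ Ioc (τ - ε) τ, ∀ b ∈ Ioc (τ - ε) τ, dist a b ≤ ε := fun a ha b hb => by
      simpa using Real.dist_le_of_mem_Icc (Ioc_subset_Icc_self ha) (Ioc_subset_Icc_self hb)
    have hτ' : τ ∈ Ioc (τ - ε) τ := right_mem_Ioc.2 (by linarith)
    filter_upwards [ae_restrict_mem hW] with s hs
    filter_upwards [ae_restrict_mem hW,
      ae_restrict_of_ae_restrict_of_subset inter_subset_right hv'] with t ht hvt η hη
    rw [hvt.1]
    exact hinward _ ⟨⟨τ, hτ, rfl⟩, hfr⟩ t (hclose t ht.2 τ hτ (hdist t ht.1 τ hτ')) (xb s)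
      ((hclose s hs.2 t ht.2 (hdist s hs.1 t ht.1)).trans (half_le_self hδ.le)) η hη
  · intro hS
    have hsub : Ico S (S + ε) ⊆ Icc S T := fun t ht =>
      ⟨ht.1, by linarith [ht.2, min_le_left (T - S) (δ / (2 * (K + 1)))]⟩
    have hS' : S ∈ Icc S T := left_mem_Icc.2 hST.le
    filter_upwards [ae_restrict_mem measurableSet_Ico,
      ae_restrict_of_ae_restrict_of_subset hsub hv'] with t ht hvt x hx η hη
    have htS := hclose t (hsub ht) S hS'
      (by rw [Real.dist_eq, abs_of_nonneg (by linarith [ht.1])]; linarith [ht.2])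
    rw [hvt.1]
    exact hinward _ ⟨⟨S, hS', rfl⟩, hS⟩ t htS x
      (by linarith [dist_triangle x (xb S) (xb t), dist_comm (xb S) (xb t), mem_closedBall.1 hx.1])
      η hη

end Control

theorem exists_inward_pointing_control_general
    (S T : ℝ) (hST : S < T)
    (L : ℝ → EuclideanSpace ℝ (Fin n) → EuclideanSpace ℝ (Fin n) → ℝ)
    (x₀ : EuclideanSpace ℝ (Fin n)) (A : Set (EuclideanSpace ℝ (Fin n)))
    (xb xb' : ℝ → EuclideanSpace ℝ (Fin n))
    (hmin : IsW11LocalMinCV S T L x₀ A xb xb')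
    (hLip : ∃ K : NNReal, LipschitzOnWith K xb (Icc S T))
    (hCQ : ∀ z, z ∈ xb '' Icc S T → z ∈ frontier A →
      (interior (clarkeTangentCone A z)).Nonempty) :
    ∃ (ε ρ β C C₁ : ℝ), 0 < ε ∧ 0 < ρ ∧ 0 < β ∧ 0 < C ∧ 0 < C₁ ∧
      ∃ v : ℝ → EuclideanSpace ℝ (Fin n), Measurable v ∧
      (∀ᵐ t ∂(volume.restrict (Icc S T)), ‖v t - xb' t‖ ≤ C ∧ ‖v t‖ ≤ C₁) ∧
      (∀ τ ∈ Icc S T, xb τ ∈ frontier A →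
        ∀ᵐ s ∂(volume.restrict (Ioc (τ - ε) τ ∩ Icc S T)),
        ∀ᵐ t ∂(volume.restrict (Ioc (τ - ε) τ ∩ Icc S T)),
        ∀ η ∈ convexHull ℝ
          (limitingNormalCone A (xb s) ∩ sphere (0 : EuclideanSpace ℝ (Fin n)) 1),
          ⟪v t - xb' t, η⟫ < -β) ∧
      (x₀ ∈ frontier A →
        ∀ᵐ t ∂(volume.restrict (Ico S (S + ε))),
        ∀ x ∈ closedBall x₀ ρ ∩ frontier A,
        ∀ η ∈ convexHull ℝ
          (limitingNormalCone A x ∩ sphere (0 : EuclideanSpace ℝ (Fin n)) 1),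
          ⟪v t - xb' t, η⟫ < -β) := by
  obtain ⟨⟨hI, hrep, -, -⟩, -⟩ := hmin
  obtain ⟨K, hK⟩ := hLip
  have hx₀ : xb S = x₀ := by simpa using hrep S (left_mem_Icc.2 hST.le)
  have hB : IsCompact (xb '' Icc S T ∩ frontier A) :=
    (isCompact_Icc.image_of_continuousOn hK.continuousOn).inter_right isClosed_frontier
  obtain ⟨Ξ, hΞm, ⟨C, hC⟩, δ, hδ, hΞ⟩ := exists_measurable_uniform_choice hB
    (fun x ξ => PointsInward A ξ x)
    fun z hz => exists_pointsInward_of_interior_clarkeTangentCone_nonempty (hCQ z hz.1 hz.2)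
  rw [← hx₀]
  exact exists_inward_control_of_uniform_choice hST hK hI.aestronglyMeasurable
    (ae_norm_le_of_lipschitzOnWith_primitive hST.le hI hrep hK) hΞm hC hδ hΞ

/-- Lemma 3: existence of a bounded measurable "control" `v` pulling the dynamics
inside the state constraint set more than the reference minimizer. -/
theorem exists_inward_pointing_control
    (S T : ℝ) (hST : S < T)
    (L : ℝ → EuclideanSpace ℝ (Fin n) → EuclideanSpace ℝ (Fin n) → ℝ)
    (x₀ : EuclideanSpace ℝ (Fin n)) (A : Set (EuclideanSpace ℝ (Fin n)))
    (hA : IsClosed A) (hAne : A.Nonempty)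
    (xb xb' : ℝ → EuclideanSpace ℝ (Fin n))
    (hmin : IsW11LocalMinCV S T L x₀ A xb xb')
    (hLip : ∃ K : NNReal, LipschitzOnWith K xb (Icc S T))
    (hCV1 : HypCV1 S T L xb)
    (hCQ : ∀ z, z ∈ xb '' Icc S T → z ∈ frontier A →
      (interior (clarkeTangentCone A z)).Nonempty) :
    ∃ (ε ρ β C C₁ : ℝ), 0 < ε ∧ 0 < ρ ∧ 0 < β ∧ 0 < C ∧ 0 < C₁ ∧
      ∃ v : ℝ → EuclideanSpace ℝ (Fin n), Measurable v ∧
      (∀ᵐ t ∂(volume.restrict (Icc S T)), ‖v t - xb' t‖ ≤ C ∧ ‖v t‖ ≤ C₁) ∧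
      (∀ τ ∈ Icc S T, xb τ ∈ frontier A →
        ∀ᵐ s ∂(volume.restrict (Ioc (τ - ε) τ ∩ Icc S T)),
        ∀ᵐ t ∂(volume.restrict (Ioc (τ - ε) τ ∩ Icc S T)),
        ∀ η ∈ convexHull ℝ
          (limitingNormalCone A (xb s) ∩ sphere (0 : EuclideanSpace ℝ (Fin n)) 1),
          ⟪v t - xb' t, η⟫ < -β) ∧
      (x₀ ∈ frontier A →
        ∀ᵐ t ∂(volume.restrict (Ico S (S + ε))),
        ∀ x ∈ closedBall x₀ ρ ∩ frontier A,
        ∀ η ∈ convexHull ℝ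
          (limitingNormalCone A x ∩ sphere (0 : EuclideanSpace ℝ (Fin n)) 1),
          ⟪v t - xb' t, η⟫ < -β) :=
  exists_inward_pointing_control_general S T hST L x₀ A xb xb' hmin hLip hCQ
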